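/- For vertices p and q in the same component G_m of a graph where additional inter-component edges have been added only between distinct components, the shortest path between p and q in the augmented graph may be shorter than in G_m only if the path uses at least two inter-component edges; if all inter-component edges have weight at least the diameter of G_m, intra-component shortest distances are unchanged. -/

import Mathlib

/-!
A walk in `G` from `p` to `q` either stays in `G₁`, and then weighs at least `d_{G₁}(p, q)`,
or leaves `G₁` for the first time along an edge `a → b` with `b ∉ G₁`. The part before that edge
weighs at least `d_{G₁}(p, a)` and the edge itself at least the diameter, hence at least
`d_{G₁}(a, q)`; by the triangle inequality the walk weighs at least `d_{G₁}(p, q)` either way.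
-/

open SimpleGraph ENNReal

/-- Total weight of a walk in a weighted graph. -/
noncomputable def walkWeight {V : Type*} {G : SimpleGraph V} (w : V → V → ℝ≥0∞)
    {u v : V} (p : G.Walk u v) : ℝ≥0∞ :=
  (p.darts.map (fun d => w d.toProd.1 d.toProd.2)).sum

/-- Weighted shortest-path distance: infimum of walk weights. -/
noncomputable def wdist {V : Type*} (G : SimpleGraph V) (w : V → V → ℝ≥0∞)
    (u v : V) : ℝ≥0∞ :=
  ⨅ p : G.Walk u v, walkWeight w p

section WeightedDistance

variable {V : Type*} {G : SimpleGraph V} (w : V → V → ℝ≥0∞)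

@[simp]
lemma walkWeight_nil {u : V} : walkWeight w (Walk.nil : G.Walk u u) = 0 := rfl

@[simp]
lemma walkWeight_cons {u v x : V} (h : G.Adj u v) (p : G.Walk v x) :
    walkWeight w (Walk.cons h p) = w u v + walkWeight w p := by
  simp [walkWeight]

lemma walkWeight_append {u v x : V} (p : G.Walk u v) (q : G.Walk v x) :
    walkWeight w (p.append q) = walkWeight w p + walkWeight w q := by
  simp [walkWeight, Walk.darts_append]

lemma wdist_le_walkWeight {u v : V} (p : G.Walk u v) : wdist G w u v ≤ walkWeight w p :=
  iInf_le _ _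

lemma le_wdist {u v : V} {c : ℝ≥0∞} (h : ∀ p : G.Walk u v, c ≤ walkWeight w p) :
    c ≤ wdist G w u v :=
  le_iInf h

@[simp]
lemma wdist_self (u : V) : wdist G w u u = 0 :=
  nonpos_iff_eq_zero.mp (wdist_le_walkWeight w Walk.nil)

lemma wdist_le_of_adj {u v : V} (h : G.Adj u v) : wdist G w u v ≤ w u v := by
  simpa using wdist_le_walkWeight w (Walk.cons h Walk.nil)

lemma wdist_triangle (u x v : V) : wdist G w u v ≤ wdist G w u x + wdist G w x v :=
  ENNReal.le_iInf_add_iInf fun p q => walkWeight_append w p q ▸ wdist_le_walkWeight w _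

end WeightedDistance

section Map

variable {V W : Type*} {G : SimpleGraph V} {H : SimpleGraph W} (w : W → W → ℝ≥0∞) (f : G →g H)

lemma walkWeight_map {u v : V} (p : G.Walk u v) :
    walkWeight w (p.map f) = walkWeight (fun a b => w (f a) (f b)) p := by
  induction p with
  | nil => rfl
  | cons h p ih => simp [ih]

lemma wdist_map_le (u v : V) :
    wdist H w (f u) (f v) ≤ wdist G (fun a b => w (f a) (f b)) u v :=
  le_wdist _ fun p => walkWeight_map w f p ▸ wdist_le_walkWeight w (p.map f)

end Map

section Components

variable {V₁ V₂ : Type*} {G : SimpleGraph (V₁ ⊕ V₂)} {G₁ : SimpleGraph V₁}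
  {w : (V₁ ⊕ V₂) → (V₁ ⊕ V₂) → ℝ≥0∞}

lemma wdist_le_walkWeight_of_exit_ge_eccentricity
    (hadj : ∀ a b, G.Adj (.inl a) (.inl b) → G₁.Adj a b)
    (hexit : ∀ a b q, G.Adj (.inl a) (.inr b) →
      wdist G₁ (fun a b => w (.inl a) (.inl b)) a q ≤ w (.inl a) (.inr b))
    {x y : V₁ ⊕ V₂} (P : G.Walk x y) (p q : V₁) (hx : x = .inl p) (hy : y = .inl q) :
    wdist G₁ (fun a b => w (.inl a) (.inl b)) p q ≤ walkWeight w P := by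
  induction P generalizing p with
  | nil =>
    obtain rfl : p = q := Sum.inl_injective (hx.symm.trans hy)
    simp
  | @cons _ z _ h P ih =>
    subst hx
    rw [walkWeight_cons]
    cases z with
    | inl r =>
      calc _ ≤ wdist G₁ _ p r + wdist G₁ _ r q := wdist_triangle _ p r q
        _ ≤ _ := add_le_add (wdist_le_of_adj _ (hadj p r h)) (ih r rfl hy)
    | inr b => exact (hexit p b q h).trans le_self_add

end Components

theorem intra_component_distances_unchanged_general {V₁ V₂ : Type*}
    (G : SimpleGraph (V₁ ⊕ V₂)) (G₁ : SimpleGraph V₁)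
    (w : (V₁ ⊕ V₂) → (V₁ ⊕ V₂) → ℝ≥0∞)
    (w₁ : V₁ → V₁ → ℝ≥0∞) (hw₁ : w₁ = fun a b => w (.inl a) (.inl b))
    (h11 : ∀ a b, G.Adj (.inl a) (.inl b) ↔ G₁.Adj a b)
    (D : ℝ≥0∞) (hD : D = ⨆ u, ⨆ v, wdist G₁ w₁ u v)
    (hinter : ∀ (a : V₁) (b : V₂), G.Adj (.inl a) (.inr b) → D ≤ w (.inl a) (.inr b)) :
    ∀ p q : V₁, wdist G w (.inl p) (.inl q) = wdist G₁ w₁ p q := by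
  subst hw₁
  intro p q
  have hexit : ∀ a b r, G.Adj (.inl a) (.inr b) →
      wdist G₁ (fun a b => w (.inl a) (.inl b)) a r ≤ w (.inl a) (.inr b) :=
    fun a b r h => (hD ▸ le_iSup₂ (f := fun u v => wdist G₁ _ u v) a r).trans (hinter a b h)
  refine le_antisymm ?_ ?_
  · exact wdist_map_le w ⟨Sum.inl, (h11 _ _).mpr⟩ p q
  · exact le_wdist w fun P => wdist_le_walkWeight_of_exit_ge_eccentricity
      (fun a b => (h11 a b).mp) hexit P p q rfl rfl

/-- If the component `G₁` (= `G_m`) of a weighted graph is augmented by other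
components and inter-component edges, each of weight at least the diameter of
`G₁`, then intra-component shortest-path distances are unchanged. -/
theorem intra_component_distances_unchanged {V₁ V₂ : Type*}
    (G : SimpleGraph (V₁ ⊕ V₂)) (G₁ : SimpleGraph V₁)
    (w : (V₁ ⊕ V₂) → (V₁ ⊕ V₂) → ℝ≥0∞)
    (w₁ : V₁ → V₁ → ℝ≥0∞) (hw₁ : w₁ = fun a b => w (.inl a) (.inl b))
    (h11 : ∀ a b, G.Adj (.inl a) (.inl b) ↔ G₁.Adj a b)
    (hsymm : ∀ x y, w x y = w y x)
    (hc1 : G₁.Connected)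
    (D : ℝ≥0∞) (hD : D = ⨆ u, ⨆ v, wdist G₁ w₁ u v) (hDfin : D ≠ ⊤)
    (hinter : ∀ (a : V₁) (b : V₂), G.Adj (.inl a) (.inr b) → D ≤ w (.inl a) (.inr b)) :
    ∀ p q : V₁, wdist G w (.inl p) (.inl q) = wdist G₁ w₁ p q :=
  intra_component_distances_unchanged_general G G₁ w w₁ hw₁ h11 D hD hinter
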